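/- Let p be an odd prime with p ≠ 3. Then U^k(ℤ_{p^α}) is a boolean ring if and only if α < k and U^{k-α+1}(ℤ_p) is a boolean ring; moreover in that case U^k(ℤ_{p^α}) ≅ U^{k-α+1}(ℤ_p). -/

import Mathlib

/-- Cyclic factors of the group of units of `ZMod (p^a)` (Lemma int1). -/
noncomputable def pUnitsList (p a : ℕ) : List ℕ :=
  if p = 2 then (if 2 ≤ a then [2, 2 ^ (a - 2)] else [1]) else [p - 1, p ^ (a - 1)]

/-- Cyclic factors of `U(ZMod n)`, via the prime-power factorization of `n`. -/
noncomputable def unitsList (n : ℕ) : List ℕ :=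
  (Nat.factorization n).support.toList.flatMap fun p => pUnitsList p (Nat.factorization n p)

/-- One application of the units functor to a product of cyclic rings. -/
noncomputable def uStep (l : List ℕ) : List ℕ := l.flatMap unitsList

/-- Cyclic factors of the k-th iterated group of units `U^k(ZMod n)`. -/
noncomputable def UkList (k n : ℕ) : List ℕ := uStep^[k] [n]

/-- The k-th iterated group of units `U^k(ZMod n)`, as the product of its cyclic factors. -/
abbrev Uk (k n : ℕ) : Type := ∀ i : Fin (UkList k n).length, ZMod ((UkList k n).get i)

/-!
Since `U(ℤ/p^(β+1)) ≅ ℤ/(p-1) × ℤ/p^β` for odd `p`, unrolling gives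
`U^k(ℤ/p^α) ≅ U^(k-1)(ℤ/(p-1)) × ⋯ × U^(k-α)(ℤ/(p-1)) × U^(k-α)(ℤ/1)`, and the last two factors
form `U^(k-α+1)(ℤ/p)`. If `k ≤ α`, the factor `U^0(ℤ/(p-1))` occurs, of exponent `p - 1 > 2`.
Otherwise, either group being boolean forces the exponent of `A = U^(k-α)(ℤ/(p-1))` to divide 2;
then `U(A)` is a product of copies of `ℤ/1`, so every factor before `A` is trivial, and both groups
are `A × U^(k-α)(ℤ/1)` up to trivial factors.
-/

def IsBoolean (G : Type*) [Zero G] [Add G] : Prop :=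
  Nontrivial G ∧ ∀ x : G, x + x = 0

theorem IsBoolean.of_addEquiv {G H : Type*} [AddZeroClass G] [AddZeroClass H] (e : G ≃+ H)
    (hG : IsBoolean G) : IsBoolean H :=
  ⟨e.toEquiv.nontrivial_congr.mp hG.1, fun x => by
    simpa using congrArg e (hG.2 (e.symm x))⟩

theorem forall_add_self_eq_zero_iff_exponent_dvd_two {G : Type*} [AddMonoid G] :
    (∀ x : G, x + x = 0) ↔ AddMonoid.exponent G ∣ 2 := by
  simp only [AddMonoid.exponent_dvd_iff_forall_nsmul_eq_zero, two_nsmul]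

abbrev ZModPi (l : List ℕ) : Type := ∀ i : Fin l.length, ZMod (l.get i)

namespace ZModPi

theorem forall_add_self_eq_zero_iff {l : List ℕ} :
    (∀ x : ZModPi l, x + x = 0) ↔ ∀ n ∈ l, n ∣ 2 := by
  rw [forall_add_self_eq_zero_iff_exponent_dvd_two, AddMonoid.exponent_pi, Finset.lcm_dvd_iff]
  simp [ZMod.exponent, List.forall_mem_iff_get]

theorem dvd_two_of_isBoolean {l s : List ℕ} (hsl : s ⊆ l) (hl : IsBoolean (ZModPi l)) :
    ∀ n ∈ s, n ∣ 2 :=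
  fun n hn => forall_add_self_eq_zero_iff.mp hl.2 n (hsl hn)

def consAddEquiv (a : ℕ) (l : List ℕ) : ZModPi (a :: l) ≃+ ZMod a × ZModPi l :=
  { (Fin.consEquiv _).symm with map_add' := fun _ _ => rfl }

theorem nonempty_addEquiv_filter (l : List ℕ) :
    Nonempty (ZModPi l ≃+ ZModPi (l.filter (· ≠ 1))) := by
  induction l with
  | nil => exact ⟨AddEquiv.refl _⟩
  | cons a l ih =>
    obtain ⟨e⟩ := ih
    by_cases ha : a = 1
    · subst ha
      rw [List.filter_cons_of_neg (by simp)]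
      exact ⟨(consAddEquiv 1 l).trans (AddEquiv.uniqueProd.trans e)⟩
    · rw [List.filter_cons_of_pos (by simpa using ha)]
      exact ⟨(consAddEquiv a l).trans (((AddEquiv.refl _).prodCongr e).trans
        (consAddEquiv a _).symm)⟩

theorem nonempty_addEquiv_of_filter_eq {l₁ l₂ : List ℕ}
    (h : l₁.filter (· ≠ 1) = l₂.filter (· ≠ 1)) : Nonempty (ZModPi l₁ ≃+ ZModPi l₂) := by
  obtain ⟨e₁⟩ := nonempty_addEquiv_filter l₁
  obtain ⟨e₂⟩ := nonempty_addEquiv_filter l₂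
  rw [h] at e₁
  exact ⟨e₁.trans e₂.symm⟩

end ZModPi

theorem unitsList_one : unitsList 1 = [] := by
  simp [unitsList]

theorem unitsList_two : unitsList 2 = [1] := by
  simp [unitsList, Nat.prime_two.factorization, pUnitsList]

theorem unitsList_prime_pow_succ {p : ℕ} (hp : p.Prime) (hp2 : p ≠ 2) (β : ℕ) :
    unitsList (p ^ (β + 1)) = [p - 1, p ^ β] := by
  rw [unitsList, hp.factorization_pow, Finsupp.support_single _ β.succ_ne_zero]
  simp [pUnitsList, hp2]

theorem uStep_append (l₁ l₂ : List ℕ) : uStep (l₁ ++ l₂) = uStep l₁ ++ uStep l₂ :=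
  List.flatMap_append

theorem uStep_iterate_append (m : ℕ) (l₁ l₂ : List ℕ) :
    uStep^[m] (l₁ ++ l₂) = uStep^[m] l₁ ++ uStep^[m] l₂ := by
  induction m generalizing l₁ l₂ with
  | zero => rfl
  | succ m ih => rw [Function.iterate_succ_apply, uStep_append, ih]; rfl

theorem uStep_singleton (n : ℕ) : uStep [n] = unitsList n :=
  List.flatMap_singleton _ _

theorem eq_one_of_mem_uStep {l : List ℕ} (hl : ∀ n ∈ l, n ∣ 2) : ∀ n ∈ uStep l, n = 1 := by
  intro n hn
  obtain ⟨a, ha, hna⟩ := List.mem_flatMap.mp hn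
  rcases (Nat.dvd_prime Nat.prime_two).mp (hl a ha) with rfl | rfl
  · simp [unitsList_one] at hna
  · simpa [unitsList_two] using hna

theorem eq_one_of_mem_uStep_iterate {l : List ℕ} (hl : ∀ n ∈ l, n ∣ 2) (i : ℕ) :
    ∀ n ∈ uStep^[i + 1] l, n = 1 := by
  induction i with
  | zero => exact eq_one_of_mem_uStep hl
  | succ i ih =>
    rw [Function.iterate_succ_apply']
    exact eq_one_of_mem_uStep fun n hn => (ih n hn).symm ▸ one_dvd 2

section OddPrime

variable {p : ℕ}

theorem uStep_iterate_prime_pow_succ (hp : p.Prime) (hp2 : p ≠ 2) (m β : ℕ) :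
    uStep^[m + 1] [p ^ (β + 1)] = uStep^[m] [p - 1] ++ uStep^[m] [p ^ β] := by
  rw [Function.iterate_succ_apply, uStep_singleton, unitsList_prime_pow_succ hp hp2,
    ← List.singleton_append, uStep_iterate_append]

theorem uStep_iterate_sub_one_subset (hp : p.Prime) (hp2 : p ≠ 2) {j t β : ℕ} (htβ : t ≤ β) :
    uStep^[j] [p - 1] ⊆ uStep^[j + t + 1] [p ^ (β + 1)] := by
  induction t generalizing β with
  | zero =>
    rw [uStep_iterate_prime_pow_succ hp hp2]
    exact List.subset_append_left _ _
  | succ t ih =>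
    obtain ⟨β, rfl⟩ := Nat.exists_eq_add_of_le' (Nat.one_le_of_lt htβ)
    rw [← add_assoc, uStep_iterate_prime_pow_succ hp hp2]
    exact fun n hn => List.mem_append_right _ (ih (β := β) (by omega) hn)

theorem filter_uStep_iterate_prime_pow (hp : p.Prime) (hp2 : p ≠ 2) {j : ℕ}
    (hF : ∀ n ∈ uStep^[j] [p - 1], n ∣ 2) (β : ℕ) :
    (uStep^[j + β + 1] [p ^ (β + 1)]).filter (· ≠ 1) = (uStep^[j + 1] [p]).filter (· ≠ 1) := by
  induction β with
  | zero => rw [zero_add, pow_one]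
  | succ β ih =>
    have hones : ∀ n ∈ uStep^[j + β + 1] [p - 1], n = 1 := by
      rw [show j + β + 1 = β + 1 + j by ring, Function.iterate_add_apply]
      exact eq_one_of_mem_uStep_iterate hF β
    rw [show j + (β + 1) + 1 = j + β + 1 + 1 by ring, uStep_iterate_prime_pow_succ hp hp2,
      List.filter_append, List.filter_eq_nil_iff.mpr (by simpa using hones), List.nil_append, ih]

theorem not_isBoolean_Uk_prime_pow (hp : p.Prime) (hp3 : 3 < p) {k α : ℕ} (hk : 1 ≤ k)
    (hkα : k ≤ α) : ¬ IsBoolean (Uk k (p ^ α)) := by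
  obtain ⟨t, rfl⟩ := Nat.exists_eq_add_of_le' hk
  obtain ⟨β, rfl⟩ := Nat.exists_eq_add_of_le' (hk.trans hkα)
  have hmem : [p - 1] ⊆ UkList (t + 1) (p ^ (β + 1)) := by
    simpa [UkList] using uStep_iterate_sub_one_subset hp (by omega) (j := 0) (t := t) (β := β)
      (by omega)
  intro h
  have := Nat.le_of_dvd two_pos (ZModPi.dvd_two_of_isBoolean hmem h (p - 1) (by simp))
  omega

theorem nonempty_addEquiv_Uk_prime_pow_of_isBoolean (hp : p.Prime) (hp2 : p ≠ 2) (j β : ℕ)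
    (h : IsBoolean (Uk (j + β + 1) (p ^ (β + 1))) ∨ IsBoolean (Uk (j + 1) p)) :
    Nonempty (Uk (j + β + 1) (p ^ (β + 1)) ≃+ Uk (j + 1) p) := by
  have hX := uStep_iterate_sub_one_subset hp hp2 (j := j) (le_refl β)
  have hY : uStep^[j] [p - 1] ⊆ UkList (j + 1) p := by
    simpa [UkList] using uStep_iterate_sub_one_subset hp hp2 (j := j) (le_refl 0)
  have hF : ∀ n ∈ uStep^[j] [p - 1], n ∣ 2 :=
    h.elim (ZModPi.dvd_two_of_isBoolean hX) (ZModPi.dvd_two_of_isBoolean hY)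
  exact ZModPi.nonempty_addEquiv_of_filter_eq (filter_uStep_iterate_prime_pow hp hp2 hF β)

end OddPrime

theorem stmt_17 (p α k : ℕ) (hp : p.Prime) (hodd : Odd p) (hp3 : p ≠ 3)
    (hα : 1 ≤ α) (hk : 1 ≤ k) :
    ((Nontrivial (Uk k (p ^ α)) ∧ ∀ x : Uk k (p ^ α), x + x = 0) ↔
      (α < k ∧ Nontrivial (Uk (k - α + 1) p) ∧ ∀ x : Uk (k - α + 1) p, x + x = 0)) ∧
    ((Nontrivial (Uk k (p ^ α)) ∧ ∀ x : Uk k (p ^ α), x + x = 0) →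
      Nonempty (Uk k (p ^ α) ≃+ Uk (k - α + 1) p)) := by
  change (IsBoolean (Uk k (p ^ α)) ↔ α < k ∧ IsBoolean (Uk (k - α + 1) p)) ∧
    (IsBoolean (Uk k (p ^ α)) → Nonempty (Uk k (p ^ α) ≃+ Uk (k - α + 1) p))
  have hp3' : 3 < p := by
    have := hp.two_le
    have := Nat.odd_iff.mp hodd
    omega
  rcases le_or_gt k α with hkα | hαk
  · have hnot := not_isBoolean_Uk_prime_pow hp hp3' hk hkα
    simp only [hnot, false_iff, not_and, false_implies, and_true]
    omega
  · obtain ⟨β, rfl⟩ := Nat.exists_eq_add_of_le' hα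
    obtain ⟨j, rfl⟩ : ∃ j, k = j + β + 1 := ⟨k - (β + 1), by omega⟩
    rw [show j + β + 1 - (β + 1) + 1 = j + 1 by omega]
    have hiso := nonempty_addEquiv_Uk_prime_pow_of_isBoolean hp (by omega) j β
    refine ⟨⟨fun h => ⟨hαk, ?_⟩, fun ⟨_, h⟩ => ?_⟩, fun h => hiso (.inl h)⟩
    · obtain ⟨e⟩ := hiso (.inl h)
      exact h.of_addEquiv e
    · obtain ⟨e⟩ := hiso (.inr h)
      exact h.of_addEquiv e.symm
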